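/- arXiv:2205.12642 — 3 statements merged into one kernel-verified Lean document; each statement's English description precedes it below -/
import Mathlib

section
/- (Separation theorem) Let M be a real d-by-n matrix, let P_left be a d-by-d orthogonal projection matrix of rank r₁, and let P_right be an n-by-n orthogonal projection matrix of rank r₂. Set t = (d − r₁) + (n − r₂). Then for every index j (with singular values listed in non-increasing order and defined to be 0 beyond the rank), σ_{j+t}(M) ≤ σ_j(P_left · M · P_right) ≤ σ_j(M), where σ_j(·) denotes the j-th largest singular value. -/
open Matrix

/-- The Gram matrix `AᵀA` of a real matrix is Hermitian (symmetric). -/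
theorem transpose_mul_self_isHermitian {d n : ℕ} (A : Matrix (Fin d) (Fin n) ℝ) :
    (Aᵀ * A).IsHermitian := by
  rw [← Matrix.conjTranspose_eq_transpose_of_trivial]
  exact Matrix.isHermitian_conjTranspose_mul_self A

/-- The `j`-th largest singular value (0-indexed) of a real `d × n` matrix `A`:
the square root of the `j`-th largest eigenvalue of `AᵀA`, listed in non-increasing
order, and defined to be `0` for `j ≥ n` (i.e. beyond the rank). -/
noncomputable def singularValue {d n : ℕ} (A : Matrix (Fin d) (Fin n) ℝ) (j : ℕ) : ℝ :=
  if h : j < n then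
    Real.sqrt ((transpose_mul_self_isHermitian A).eigenvalues
      (Tuple.sort (transpose_mul_self_isHermitian A).eigenvalues (Fin.rev ⟨j, h⟩)))
  else 0

/-!
Both inequalities are instances of the Courant–Fischer principle for the eigenvalues of `MᵀM`:
`σ_j(N) ≥ c` as soon as `‖N x‖ ≥ c ‖x‖` on a subspace of dimension `j + 1`, and `σ_j(N) ≤ c` as
soon as `‖N x‖ ≤ c ‖x‖` on a subspace of codimension `j`. For the upper bound, pull back along `Q`
the codimension-`j` subspace on which `‖M x‖ ≤ σ_j(M) ‖x‖`; orthogonal projections do not increase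
norms. For the lower bound, `P M Q` agrees with `M` on `range Q ⊓ M⁻¹(range P)`, a subspace of
codimension at most `t`, so it meets the `(j + t + 1)`-dimensional subspace on which
`‖M x‖ ≥ σ_{j+t}(M) ‖x‖` in dimension at least `j + 1`.
-/

open Module Submodule
open scoped RealInnerProductSpace

namespace Submodule

variable {K V V' : Type*} [DivisionRing K] [AddCommGroup V] [Module K V] [FiniteDimensional K V]
  [AddCommGroup V'] [Module K V'] [FiniteDimensional K V']

theorem exists_mem_ne_zero_of_finrank_lt_add {U W : Submodule K V}
    (h : finrank K V < finrank K U + finrank K W) : ∃ x ∈ U, x ∈ W ∧ x ≠ 0 := by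
  have hUW : ¬Disjoint U W := fun hd => (finrank_add_finrank_le_of_disjoint hd).not_gt h
  simpa [disjoint_def] using hUW

theorem finrank_add_le_finrank_inf_add (U W : Submodule K V) :
    finrank K U + finrank K W ≤ finrank K (U ⊓ W : Submodule K V) + finrank K V := by
  have := (U ⊔ W).finrank_le
  have := finrank_sup_add_finrank_inf_eq U W
  omega

theorem finrank_add_le_finrank_comap_add (f : V →ₗ[K] V') (W : Submodule K V') :
    finrank K V + finrank K W ≤ finrank K (W.comap f) + finrank K V' := by
  have hker : W.comap f = LinearMap.ker (W.mkQ ∘ₗ f) := by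
    ext x; simp [Submodule.Quotient.mk_eq_zero]
  have := LinearMap.finrank_range_add_finrank_ker (W.mkQ ∘ₗ f)
  have := (LinearMap.range (W.mkQ ∘ₗ f)).finrank_le
  have := W.finrank_quotient_add_finrank
  rw [hker]
  omega

end Submodule

namespace OrthonormalBasis

variable {ι E : Type*} [Fintype ι] [NormedAddCommGroup E] [InnerProductSpace ℝ E]
  (b : OrthonormalBasis ι ℝ E)

theorem inner_eq_zero_of_mem_span_image {s : Set ι} {i : ι} (hi : i ∉ s) {x : E}
    (hx : x ∈ span ℝ (b '' s)) : ⟪b i, x⟫ = 0 := by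
  have hle : span ℝ (b '' s) ≤ (ℝ ∙ b i)ᗮ := by
    refine span_le.2 ?_
    rintro _ ⟨j, hj, rfl⟩
    rw [SetLike.mem_coe, mem_orthogonal_singleton_iff_inner_right]
    exact b.orthonormal.inner_eq_zero (by rintro rfl; exact hi hj)
  exact mem_orthogonal_singleton_iff_inner_right.1 (hle hx)

theorem finrank_span_image (s : Finset ι) : finrank ℝ (span ℝ (b '' s)) = s.card := by
  rw [Set.image_eq_range]
  exact (finrank_span_eq_card
    (b.orthonormal.linearIndependent.comp ((↑) : s → ι) Subtype.val_injective)).trans (by simp)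

variable {T : E →ₗ[ℝ] E} {μ : ι → ℝ}

theorem inner_apply_self_eq_sum (hb : ∀ i, T (b i) = μ i • b i) (x : E) :
    ⟪x, T x⟫ = ∑ i, μ i * ⟪b i, x⟫ ^ 2 := by
  nth_rewrite 2 [← b.sum_repr' x]
  simp only [map_sum, map_smul, hb, inner_sum, inner_smul_right, real_inner_comm x]
  exact Finset.sum_congr rfl fun i _ => by ring

theorem le_inner_apply_self_of_mem_span (hb : ∀ i, T (b i) = μ i • b i) {s : Set ι} {c : ℝ}
    (hc : ∀ i ∈ s, c ≤ μ i) {x : E} (hx : x ∈ span ℝ (b '' s)) : c * ‖x‖ ^ 2 ≤ ⟪x, T x⟫ := by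
  rw [b.inner_apply_self_eq_sum hb, ← b.sum_sq_inner_right, Finset.mul_sum]
  refine Finset.sum_le_sum fun i _ => ?_
  by_cases hi : i ∈ s
  · exact mul_le_mul_of_nonneg_right (hc i hi) (sq_nonneg _)
  · simp [b.inner_eq_zero_of_mem_span_image hi hx]

theorem inner_apply_self_le_of_mem_span (hb : ∀ i, T (b i) = μ i • b i) {s : Set ι} {c : ℝ}
    (hc : ∀ i ∈ s, μ i ≤ c) {x : E} (hx : x ∈ span ℝ (b '' s)) : ⟪x, T x⟫ ≤ c * ‖x‖ ^ 2 := by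
  rw [b.inner_apply_self_eq_sum hb, ← b.sum_sq_inner_right, Finset.mul_sum]
  refine Finset.sum_le_sum fun i _ => ?_
  by_cases hi : i ∈ s
  · exact mul_le_mul_of_nonneg_right (hc i hi) (sq_nonneg _)
  · simp [b.inner_eq_zero_of_mem_span_image hi hx]

end OrthonormalBasis

section CourantFischer

variable {E : Type*} [NormedAddCommGroup E] [InnerProductSpace ℝ E] {n : ℕ} {T : E →ₗ[ℝ] E}
  {b : OrthonormalBasis (Fin n) ℝ E} {μ : Fin n → ℝ}

theorem exists_finrank_eq_forall_le_inner_apply_self (hb : ∀ i, T (b i) = μ i • b i)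
    (hμ : Antitone μ) (j : Fin n) :
    ∃ U : Submodule ℝ E, finrank ℝ U = j + 1 ∧ ∀ x ∈ U, μ j * ‖x‖ ^ 2 ≤ ⟪x, T x⟫ :=
  ⟨span ℝ (b '' ↑(Finset.Iic j)), by rw [b.finrank_span_image, Fin.card_Iic],
    fun _ hx => b.le_inner_apply_self_of_mem_span hb (fun _ hi => hμ (Finset.mem_Iic.1 hi)) hx⟩

theorem exists_finrank_add_eq_forall_inner_apply_self_le (hb : ∀ i, T (b i) = μ i • b i)
    (hμ : Antitone μ) (j : Fin n) :
    ∃ W : Submodule ℝ E, finrank ℝ W + j = n ∧ ∀ x ∈ W, ⟪x, T x⟫ ≤ μ j * ‖x‖ ^ 2 :=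
  ⟨span ℝ (b '' ↑(Finset.Ici j)), by rw [b.finrank_span_image, Fin.card_Ici]; omega,
    fun _ hx => b.inner_apply_self_le_of_mem_span hb (fun _ hi => hμ (Finset.mem_Ici.1 hi)) hx⟩

theorem le_of_forall_le_inner_apply_self (hb : ∀ i, T (b i) = μ i • b i) (hμ : Antitone μ)
    (j : Fin n) {U : Submodule ℝ E} (hU : j + 1 ≤ finrank ℝ U) {c : ℝ}
    (hc : ∀ x ∈ U, c * ‖x‖ ^ 2 ≤ ⟪x, T x⟫) : c ≤ μ j := by
  obtain ⟨W, hW, hWμ⟩ := exists_finrank_add_eq_forall_inner_apply_self_le hb hμ j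
  have := Module.Finite.of_basis b.toBasis
  have hE : finrank ℝ E = n := by simp [finrank_eq_card_basis b.toBasis]
  obtain ⟨x, hxU, hxW, hx0⟩ := exists_mem_ne_zero_of_finrank_lt_add (U := U) (W := W) (by omega)
  exact le_of_mul_le_mul_right ((hc x hxU).trans (hWμ x hxW)) (by positivity)

theorem le_of_forall_inner_apply_self_le (hb : ∀ i, T (b i) = μ i • b i) (hμ : Antitone μ)
    (j : Fin n) {W : Submodule ℝ E} (hW : n ≤ finrank ℝ W + j) {c : ℝ}
    (hc : ∀ x ∈ W, ⟪x, T x⟫ ≤ c * ‖x‖ ^ 2) : μ j ≤ c := by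
  obtain ⟨U, hU, hUμ⟩ := exists_finrank_eq_forall_le_inner_apply_self hb hμ j
  have := Module.Finite.of_basis b.toBasis
  have hE : finrank ℝ E = n := by simp [finrank_eq_card_basis b.toBasis]
  obtain ⟨x, hxU, hxW, hx0⟩ := exists_mem_ne_zero_of_finrank_lt_add (U := U) (W := W) (by omega)
  exact le_of_mul_le_mul_right ((hUμ x hxU).trans (hc x hxW)) (by positivity)

end CourantFischer

theorem LinearMap.IsSymmetricProjection.norm_apply_le {𝕜 E : Type*} [RCLike 𝕜]
    [NormedAddCommGroup E] [InnerProductSpace 𝕜 E] {p : E →ₗ[𝕜] E}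
    (hp : p.IsSymmetricProjection) (x : E) : ‖p x‖ ≤ ‖x‖ := by
  obtain ⟨K, _, rfl⟩ := p.isSymmetricProjection_iff_eq_coe_starProjection.1 hp
  exact K.norm_starProjection_apply_le x

namespace Matrix

variable {ι κ : Type*} [Fintype ι] [DecidableEq ι] [Fintype κ]

theorem rank_eq_finrank_range_toEuclideanLin {𝕜 : Type*} [RCLike 𝕜] (A : Matrix κ ι 𝕜) :
    A.rank = finrank 𝕜 (LinearMap.range (toEuclideanLin A)) := by
  rw [toEuclideanLin_eq_toLin_orthonormal]
  exact A.rank_eq_finrank_range_toLin _ _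

theorem isIdempotentElem_toEuclideanLin {𝕜 : Type*} [RCLike 𝕜] {P : Matrix ι ι 𝕜}
    (hidem : P * P = P) : IsIdempotentElem (toEuclideanLin P) := by
  change toEuclideanLin P ∘ₗ toEuclideanLin P = toEuclideanLin P
  rw [← toLpLin_mul_same, hidem]

theorem isSymmetricProjection_toEuclideanLin {P : Matrix ι ι ℝ} (hsymm : Pᵀ = P)
    (hidem : P * P = P) : (toEuclideanLin P).IsSymmetricProjection where
  isIdempotentElem := isIdempotentElem_toEuclideanLin hidem
  isSymmetric := isSymmetric_toEuclideanLin_iff.2 hsymm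

theorem inner_toEuclideanLin_transpose_mul_self [DecidableEq κ] (N : Matrix κ ι ℝ)
    (x : EuclideanSpace ℝ ι) :
    ⟪x, toEuclideanLin (Nᵀ * N) x⟫ = ‖toEuclideanLin N x‖ ^ 2 := by
  rw [toLpLin_mul_same, LinearMap.comp_apply, ← conjTranspose_eq_transpose_of_trivial,
    toEuclideanLin_conjTranspose_eq_adjoint, LinearMap.adjoint_inner_right,
    real_inner_self_eq_norm_sq]

namespace IsHermitian

variable {n : ℕ} {A : Matrix (Fin n) (Fin n) ℝ} (hA : A.IsHermitian)

noncomputable def sortedEigenvalues (j : Fin n) : ℝ :=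
  hA.eigenvalues (Tuple.sort hA.eigenvalues j.rev)

noncomputable def sortedEigenvectorBasis : OrthonormalBasis (Fin n) ℝ (EuclideanSpace ℝ (Fin n)) :=
  hA.eigenvectorBasis.reindex (Fin.revPerm.trans (Tuple.sort hA.eigenvalues)).symm

theorem sortedEigenvalues_antitone : Antitone hA.sortedEigenvalues :=
  fun _ _ hij => Tuple.monotone_sort hA.eigenvalues (Fin.rev_le_rev.2 hij)

theorem toEuclideanLin_sortedEigenvectorBasis (j : Fin n) :
    toEuclideanLin A (hA.sortedEigenvectorBasis j) =
      hA.sortedEigenvalues j • hA.sortedEigenvectorBasis j := by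
  simp only [sortedEigenvectorBasis, OrthonormalBasis.reindex_apply, Equiv.symm_symm]
  exact WithLp.ofLp_injective 2 (hA.mulVec_eigenvectorBasis _)

end IsHermitian

end Matrix

section SingularValue

open Matrix

variable {d n : ℕ} (N : Matrix (Fin d) (Fin n) ℝ)

theorem singularValue_of_lt {j : ℕ} (hj : j < n) :
    singularValue N j = √((transpose_mul_self_isHermitian N).sortedEigenvalues ⟨j, hj⟩) := by
  rw [singularValue, dif_pos hj]
  rfl

theorem singularValue_of_le {j : ℕ} (hj : n ≤ j) : singularValue N j = 0 := by
  rw [singularValue, dif_neg hj.not_gt]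

theorem singularValue_nonneg (j : ℕ) : 0 ≤ singularValue N j := by
  rw [singularValue]
  split
  · exact Real.sqrt_nonneg _
  · exact le_rfl

theorem exists_finrank_eq_forall_singularValue_mul_norm_le {j : ℕ} (hj : j < n) :
    ∃ U : Submodule ℝ (EuclideanSpace ℝ (Fin n)), finrank ℝ U = j + 1 ∧
      ∀ x ∈ U, singularValue N j * ‖x‖ ≤ ‖toEuclideanLin N x‖ := by
  set hG := transpose_mul_self_isHermitian N
  obtain ⟨U, hU, hUμ⟩ := exists_finrank_eq_forall_le_inner_apply_self
    hG.toEuclideanLin_sortedEigenvectorBasis hG.sortedEigenvalues_antitone ⟨j, hj⟩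
  refine ⟨U, hU, fun x hx => ?_⟩
  have hx := hUμ x hx
  rw [inner_toEuclideanLin_transpose_mul_self] at hx
  calc singularValue N j * ‖x‖ = √(hG.sortedEigenvalues ⟨j, hj⟩ * ‖x‖ ^ 2) := by
        rw [singularValue_of_lt N hj, Real.sqrt_mul' _ (sq_nonneg _), Real.sqrt_sq (norm_nonneg _)]
    _ ≤ √(‖toEuclideanLin N x‖ ^ 2) := Real.sqrt_le_sqrt hx
    _ = ‖toEuclideanLin N x‖ := Real.sqrt_sq (norm_nonneg _)

theorem exists_le_finrank_add_forall_norm_le_singularValue_mul (j : ℕ) :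
    ∃ W : Submodule ℝ (EuclideanSpace ℝ (Fin n)), n ≤ finrank ℝ W + j ∧
      ∀ x ∈ W, ‖toEuclideanLin N x‖ ≤ singularValue N j * ‖x‖ := by
  rcases le_or_gt n j with hj | hj
  · exact ⟨⊥, by simpa using hj, fun x hx => by simp [(Submodule.mem_bot ℝ).1 hx]⟩
  set hG := transpose_mul_self_isHermitian N
  obtain ⟨W, hW, hWμ⟩ := exists_finrank_add_eq_forall_inner_apply_self_le
    hG.toEuclideanLin_sortedEigenvectorBasis hG.sortedEigenvalues_antitone ⟨j, hj⟩
  refine ⟨W, hW.ge, fun x hx => ?_⟩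
  have hx := hWμ x hx
  rw [inner_toEuclideanLin_transpose_mul_self] at hx
  calc ‖toEuclideanLin N x‖ = √(‖toEuclideanLin N x‖ ^ 2) := (Real.sqrt_sq (norm_nonneg _)).symm
    _ ≤ √(hG.sortedEigenvalues ⟨j, hj⟩ * ‖x‖ ^ 2) := Real.sqrt_le_sqrt hx
    _ = singularValue N j * ‖x‖ := by
        rw [singularValue_of_lt N hj, Real.sqrt_mul' _ (sq_nonneg _), Real.sqrt_sq (norm_nonneg _)]

theorem le_singularValue_of_forall_mul_norm_le {j : ℕ}
    {U : Submodule ℝ (EuclideanSpace ℝ (Fin n))} (hU : j + 1 ≤ finrank ℝ U) {c : ℝ}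
    (hc : ∀ x ∈ U, c * ‖x‖ ≤ ‖toEuclideanLin N x‖) : c ≤ singularValue N j := by
  rcases le_or_gt c 0 with hc0 | hc0
  · exact hc0.trans (singularValue_nonneg N j)
  have hj : j < n := by
    have := U.finrank_le
    rw [finrank_euclideanSpace_fin] at this
    omega
  set hG := transpose_mul_self_isHermitian N
  rw [singularValue_of_lt N hj, Real.le_sqrt' hc0]
  refine le_of_forall_le_inner_apply_self hG.toEuclideanLin_sortedEigenvectorBasis
    hG.sortedEigenvalues_antitone ⟨j, hj⟩ hU fun x hx => ?_
  rw [inner_toEuclideanLin_transpose_mul_self, ← mul_pow]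
  exact pow_le_pow_left₀ (by positivity) (hc x hx) 2

theorem singularValue_le_of_forall_norm_le_mul {j : ℕ}
    {W : Submodule ℝ (EuclideanSpace ℝ (Fin n))} (hW : n ≤ finrank ℝ W + j) {c : ℝ} (hc0 : 0 ≤ c)
    (hc : ∀ x ∈ W, ‖toEuclideanLin N x‖ ≤ c * ‖x‖) : singularValue N j ≤ c := by
  rcases le_or_gt n j with hj | hj
  · rw [singularValue_of_le N hj]
    exact hc0
  set hG := transpose_mul_self_isHermitian N
  rw [singularValue_of_lt N hj, Real.sqrt_le_left hc0]
  refine le_of_forall_inner_apply_self_le hG.toEuclideanLin_sortedEigenvectorBasis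
    hG.sortedEigenvalues_antitone ⟨j, hj⟩ hW fun x hx => ?_
  rw [inner_toEuclideanLin_transpose_mul_self, ← mul_pow]
  exact pow_le_pow_left₀ (norm_nonneg _) (hc x hx) 2

end SingularValue

section Separation

open Matrix LinearMap

variable {d n : ℕ} (M : Matrix (Fin d) (Fin n) ℝ) {P : Matrix (Fin d) (Fin d) ℝ}
  {Q : Matrix (Fin n) (Fin n) ℝ}

theorem singularValue_mul_mul_le (hPsymm : Pᵀ = P) (hPidem : P * P = P) (hQsymm : Qᵀ = Q)
    (hQidem : Q * Q = Q) (j : ℕ) : singularValue (P * M * Q) j ≤ singularValue M j := by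
  have hP := isSymmetricProjection_toEuclideanLin hPsymm hPidem
  have hQ := isSymmetricProjection_toEuclideanLin hQsymm hQidem
  have hσ := singularValue_nonneg M j
  obtain ⟨W, hW, hWσ⟩ := exists_le_finrank_add_forall_norm_le_singularValue_mul M j
  have hWQ := finrank_add_le_finrank_comap_add (toEuclideanLin Q) W
  refine singularValue_le_of_forall_norm_le_mul _ (W := W.comap (toEuclideanLin Q))
    (by omega) hσ fun x hx => ?_
  simp only [toLpLin_mul_same]
  calc ‖toEuclideanLin P (toEuclideanLin M (toEuclideanLin Q x))‖
      ≤ ‖toEuclideanLin M (toEuclideanLin Q x)‖ := hP.norm_apply_le _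
    _ ≤ singularValue M j * ‖toEuclideanLin Q x‖ := hWσ _ hx
    _ ≤ singularValue M j * ‖x‖ := mul_le_mul_of_nonneg_left (hQ.norm_apply_le x) hσ

theorem singularValue_add_le_singularValue_mul_mul (hPidem : P * P = P) (hQidem : Q * Q = Q)
    (j : ℕ) :
    singularValue M (j + ((d - P.rank) + (n - Q.rank))) ≤ singularValue (P * M * Q) j := by
  rcases le_or_gt n (j + ((d - P.rank) + (n - Q.rank))) with hk | hk
  · rw [singularValue_of_le M hk]
    exact singularValue_nonneg _ j
  obtain ⟨U, hU, hUσ⟩ := exists_finrank_eq_forall_singularValue_mul_norm_le M hk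
  have hrP := rank_eq_finrank_range_toEuclideanLin P
  have hrQ := rank_eq_finrank_range_toEuclideanLin Q
  have hPd := (range (toEuclideanLin P)).finrank_le
  have hQn := (range (toEuclideanLin Q)).finrank_le
  have h₁ := finrank_add_le_finrank_comap_add (toEuclideanLin M) (range (toEuclideanLin P))
  set RQ := range (toEuclideanLin Q)
  set MP := (range (toEuclideanLin P)).comap (toEuclideanLin M)
  have h₂ := finrank_add_le_finrank_inf_add RQ MP
  have h₃ := finrank_add_le_finrank_inf_add U (RQ ⊓ MP)
  simp only [finrank_euclideanSpace_fin] at h₁ h₂ h₃ hPd hQn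
  -- `finrank (U ⊓ (RQ ⊓ MP)) ≥ (j + t + 1) + rank Q + (n + rank P - d) - 2 n = j + 1`
  refine le_singularValue_of_forall_mul_norm_le _ (U := U ⊓ (RQ ⊓ MP)) (by omega)
    fun x hx => ?_
  obtain ⟨hxU, hxQ, hxP⟩ := hx
  have hQx := (isIdempotentElem_toEuclideanLin hQidem).mem_range_iff.1 hxQ
  have hPMx := (isIdempotentElem_toEuclideanLin hPidem).mem_range_iff.1 hxP
  simpa only [toLpLin_mul_same, LinearMap.comp_apply, hQx, hPMx] using hUσ x hxU

end Separation

/-- **Separation theorem.** For a real `d × n` matrix `M` and orthogonal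
projection matrices `P` (size `d`, rank `r₁`) and `Q` (size `n`, rank `r₂`), with
`t = (d - r₁) + (n - r₂)`, every singular value satisfies
`σ_{j+t}(M) ≤ σ_j(P * M * Q) ≤ σ_j(M)`. -/
theorem separation_theorem {d n : ℕ} (M : Matrix (Fin d) (Fin n) ℝ)
    (P : Matrix (Fin d) (Fin d) ℝ) (Q : Matrix (Fin n) (Fin n) ℝ)
    (hPsymm : Pᵀ = P) (hPidem : P * P = P)
    (hQsymm : Qᵀ = Q) (hQidem : Q * Q = Q)
    (t : ℕ) (ht : t = (d - P.rank) + (n - Q.rank)) (j : ℕ) :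
    singularValue M (j + t) ≤ singularValue (P * M * Q) j ∧
      singularValue (P * M * Q) j ≤ singularValue M j := by
  subst ht
  exact ⟨singularValue_add_le_singularValue_mul_mul M hPidem hQidem j,
    singularValue_mul_mul_le M hPsymm hPidem hQsymm hQidem j⟩
end

section
/- Let X be a real d-by-n matrix, let J = I − (1/n)·11ᵀ be the n-by-n centering matrix, and let X̄ = X·J be the column-centered version of X. Let λ₁ ≥ λ₂ ≥ … ≥ λ_d be the eigenvalues of the scatter matrix C̃ = XXᵀ and let λ̄₁ ≥ λ̄₂ ≥ … ≥ λ̄_d be the eigenvalues of the centered scatter matrix C = X̄X̄ᵀ, both listed in non-increasing order. Then the eigenvalues are interlaced: for every j, λ_{j+1} ≤ λ̄_j ≤ λ_j. -/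
open Matrix

/-- The `j`-th largest eigenvalue (0-indexed) of a Hermitian (symmetric) real `d × d`
matrix, listed in non-increasing order, and defined to be `0` for `j ≥ d`. -/
noncomputable def eigenvalueDesc {d : ℕ} {M : Matrix (Fin d) (Fin d) ℝ}
    (hM : M.IsHermitian) (j : ℕ) : ℝ :=
  if h : j < d then hM.eigenvalues (Tuple.sort hM.eigenvalues (Fin.rev ⟨j, h⟩)) else 0

section aux
variable {d : ℕ} {M : Matrix (Fin d) (Fin d) ℝ} (hM : M.IsHermitian)

lemma dot_eigen (i j : Fin d) :
    ((hM.eigenvectorBasis i : EuclideanSpace ℝ (Fin d)) : Fin d → ℝ) ⬝ᵥ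
      ((hM.eigenvectorBasis j : EuclideanSpace ℝ (Fin d)) : Fin d → ℝ)
      = if i = j then 1 else 0 := by
  have h := (orthonormal_iff_ite (𝕜 := ℝ)).1 hM.eigenvectorBasis.orthonormal i j
  simpa [PiLp.inner_apply, RCLike.inner_apply, dotProduct, mul_comm] using h

end aux

section core
variable {d : ℕ} {M : Matrix (Fin d) (Fin d) ℝ} (hM : M.IsHermitian)

lemma dotProduct_finsum {m : Type*} {ι : Type*} [Fintype m] (v : m → ℝ) (s : Finset ι)
    (f : ι → m → ℝ) : v ⬝ᵥ (∑ i ∈ s, f i) = ∑ i ∈ s, v ⬝ᵥ f i := by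
  simp only [dotProduct, Finset.sum_apply, Finset.mul_sum]
  rw [Finset.sum_comm]

lemma finsum_dotProduct {m : Type*} {ι : Type*} [Fintype m] (v : m → ℝ) (s : Finset ι)
    (f : ι → m → ℝ) : (∑ i ∈ s, f i) ⬝ᵥ v = ∑ i ∈ s, f i ⬝ᵥ v := by
  simp only [dotProduct, Finset.sum_apply, Finset.sum_mul]
  rw [Finset.sum_comm]

lemma mulVec_finsum {m : Type*} {ι : Type*} [Fintype m] (A : Matrix m m ℝ) (s : Finset ι)
    (f : ι → m → ℝ) : A *ᵥ (∑ i ∈ s, f i) = ∑ i ∈ s, A *ᵥ f i :=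
  map_sum A.mulVecLin f s

/-- the eigenvectors as plain functions -/
noncomputable def evec (hM : M.IsHermitian) (i : Fin d) : Fin d → ℝ :=
  (hM.eigenvectorBasis i : EuclideanSpace ℝ (Fin d))

lemma dot_evec (i j : Fin d) : evec hM i ⬝ᵥ evec hM j = if i = j then 1 else 0 :=
  dot_eigen hM i j

lemma mulVec_evec (i : Fin d) : M *ᵥ evec hM i = hM.eigenvalues i • evec hM i :=
  hM.mulVec_eigenvectorBasis i

lemma li_evec (s : Finset (Fin d)) :
    LinearIndependent ℝ (fun i : s => evec hM i) := by
  rw [Fintype.linearIndependent_iff]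
  intro c hc j
  have := congrArg (fun x => evec hM (j : Fin d) ⬝ᵥ x) hc
  simp only [dotProduct_finsum, dotProduct_smul, dot_evec, dotProduct_zero] at this
  simpa [Subtype.coe_inj, Finset.sum_ite_eq, Finset.mem_attach] using this

/-- span of a set of eigenvectors -/
noncomputable def espan (hM : M.IsHermitian) (s : Finset (Fin d)) : Submodule ℝ (Fin d → ℝ) :=
  Submodule.span ℝ (Set.range fun i : s => evec hM i)

lemma finrank_espan (s : Finset (Fin d)) :
    Module.finrank ℝ (espan hM s) = s.card := by
  rw [espan, finrank_span_eq_card (li_evec hM s)]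
  simp

lemma quad_repr {s : Finset (Fin d)} {x : Fin d → ℝ} (hx : x ∈ espan hM s) :
    ∃ c : s → ℝ, x ⬝ᵥ (M *ᵥ x) = ∑ i : s, hM.eigenvalues i * c i ^ 2 ∧
      x ⬝ᵥ x = ∑ i : s, c i ^ 2 := by
  obtain ⟨c, rfl⟩ := (Submodule.mem_span_range_iff_exists_fun ℝ).1 hx
  refine ⟨c, ?_, ?_⟩
  · rw [mulVec_finsum]
    simp only [mulVec_smul, mulVec_evec]
    rw [finsum_dotProduct]
    simp only [smul_dotProduct, dotProduct_finsum, dotProduct_smul, dot_evec, smul_eq_mul,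
      mul_ite, mul_one, mul_zero, Subtype.coe_inj]
    simp only [Finset.sum_ite_eq, Finset.mem_attach, if_true]
    exact Finset.sum_congr rfl fun i _ => by simp; ring
  · rw [finsum_dotProduct]
    simp only [smul_dotProduct, dotProduct_finsum, dotProduct_smul, dot_evec, smul_eq_mul,
      mul_ite, mul_one, mul_zero, Subtype.coe_inj]
    simp only [Finset.sum_ite_eq, Finset.mem_attach, if_true]
    exact Finset.sum_congr rfl fun i _ => by simp; ring

lemma quad_le_of_mem_espan {s : Finset (Fin d)} {C : ℝ}
    (hC : ∀ i ∈ s, hM.eigenvalues i ≤ C) {x : Fin d → ℝ} (hx : x ∈ espan hM s) :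
    x ⬝ᵥ (M *ᵥ x) ≤ C * (x ⬝ᵥ x) := by
  obtain ⟨c, h1, h2⟩ := quad_repr hM hx
  rw [h1, h2, Finset.mul_sum]
  exact Finset.sum_le_sum fun i _ =>
    mul_le_mul_of_nonneg_right (hC i i.2) (sq_nonneg _)

lemma quad_ge_of_mem_espan {s : Finset (Fin d)} {c₀ : ℝ}
    (hc : ∀ i ∈ s, c₀ ≤ hM.eigenvalues i) {x : Fin d → ℝ} (hx : x ∈ espan hM s) :
    c₀ * (x ⬝ᵥ x) ≤ x ⬝ᵥ (M *ᵥ x) := by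
  obtain ⟨c, h1, h2⟩ := quad_repr hM hx
  rw [h1, h2, Finset.mul_sum]
  exact Finset.sum_le_sum fun i _ =>
    mul_le_mul_of_nonneg_right (hc i i.2) (sq_nonneg _)

end core

section main
variable {d : ℕ} {M : Matrix (Fin d) (Fin d) ℝ} (hM : M.IsHermitian)

lemma eig_le_desc {j : ℕ} (h : j < d) {i : Fin d}
    (hi : i ∈ (Finset.Iic (Fin.rev ⟨j, h⟩)).image (Tuple.sort hM.eigenvalues)) :
    hM.eigenvalues i ≤ eigenvalueDesc hM j := by
  obtain ⟨i₀, hi₀, rfl⟩ := Finset.mem_image.1 hi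
  rw [eigenvalueDesc, dif_pos h]
  exact Tuple.monotone_sort hM.eigenvalues (Finset.mem_Iic.1 hi₀)

lemma desc_le_eig {j : ℕ} (h : j < d) {i : Fin d}
    (hi : i ∈ (Finset.Ici (Fin.rev ⟨j, h⟩)).image (Tuple.sort hM.eigenvalues)) :
    eigenvalueDesc hM j ≤ hM.eigenvalues i := by
  obtain ⟨i₀, hi₀, rfl⟩ := Finset.mem_image.1 hi
  rw [eigenvalueDesc, dif_pos h]
  exact Tuple.monotone_sort hM.eigenvalues (Finset.mem_Ici.1 hi₀)

lemma card_low {j : ℕ} (h : j < d) :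
    ((Finset.Iic (Fin.rev ⟨j, h⟩)).image (Tuple.sort hM.eigenvalues)).card = d - j := by
  rw [Finset.card_image_of_injective _ (Tuple.sort hM.eigenvalues).injective,
    Fin.card_Iic, Fin.val_rev]
  have : (⟨j, h⟩ : Fin d).val = j := rfl
  omega

lemma card_hi {j : ℕ} (h : j < d) :
    ((Finset.Ici (Fin.rev ⟨j, h⟩)).image (Tuple.sort hM.eigenvalues)).card = j + 1 := by
  rw [Finset.card_image_of_injective _ (Tuple.sort hM.eigenvalues).injective,
    Fin.card_Ici, Fin.val_rev]
  have : (⟨j, h⟩ : Fin d).val = j := rfl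
  omega

/-- Easy half of Courant–Fischer: if the Rayleigh quotient is ≥ c on a subspace of
dimension ≥ j+1, then the j-th largest eigenvalue is ≥ c. -/
lemma le_eigenvalueDesc {j : ℕ} (h : j < d) (S : Submodule ℝ (Fin d → ℝ))
    (hS : j + 1 ≤ Module.finrank ℝ S) {c : ℝ}
    (hq : ∀ x ∈ S, c * (x ⬝ᵥ x) ≤ x ⬝ᵥ (M *ᵥ x)) : c ≤ eigenvalueDesc hM j := by
  set W := espan hM ((Finset.Iic (Fin.rev ⟨j, h⟩)).image (Tuple.sort hM.eigenvalues)) with hW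
  have hWrank : Module.finrank ℝ W = d - j := by rw [hW, finrank_espan, card_low hM h]
  have hsum := Submodule.finrank_sup_add_finrank_inf_eq S W
  have htop : Module.finrank ℝ (S ⊔ W : Submodule ℝ (Fin d → ℝ)) ≤ d := by
    simpa [Module.finrank_fin_fun] using (S ⊔ W).finrank_le
  have hpos : 0 < Module.finrank ℝ (S ⊓ W : Submodule ℝ (Fin d → ℝ)) := by omega
  have hne : (S ⊓ W : Submodule ℝ (Fin d → ℝ)) ≠ ⊥ := by
    intro hbot
    rw [hbot, finrank_bot] at hpos
    exact lt_irrefl 0 hpos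
  obtain ⟨x, hxmem, hx0⟩ := Submodule.exists_mem_ne_zero_of_ne_bot hne
  have hxS : x ∈ S := hxmem.1
  have hxW : x ∈ W := hxmem.2
  have h1 : c * (x ⬝ᵥ x) ≤ x ⬝ᵥ (M *ᵥ x) := hq x hxS
  have h2 : x ⬝ᵥ (M *ᵥ x) ≤ eigenvalueDesc hM j * (x ⬝ᵥ x) :=
    quad_le_of_mem_espan hM (fun i hi => eig_le_desc hM h hi) hxW
  have hxx : 0 < x ⬝ᵥ x := by
    have := (dotProduct_self_star_pos_iff (v := x)).2 hx0
    simpa using this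
  exact le_of_mul_le_mul_right (h1.trans h2) hxx

lemma eigenvalueDesc_nonneg (hPSD : M.PosSemidef) (j : ℕ) : 0 ≤ eigenvalueDesc hM j := by
  rw [eigenvalueDesc]
  split
  · exact hPSD.eigenvalues_nonneg _
  · exact le_refl 0

end main

section thm

lemma vecMulVec_mulVec' {d : ℕ} (w x : Fin d → ℝ) :
    (vecMulVec w w) *ᵥ x = (w ⬝ᵥ x) • w := by
  ext i
  simp [mulVec, vecMulVec_apply, dotProduct, Finset.mul_sum, mul_comm, mul_assoc, mul_left_comm]


/-- Let `J = I - (1/n)·11ᵀ` be the centering matrix and `X̄ = X·J` the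
column-centered version of `X`.  The eigenvalues (in non-increasing order) of the scatter
matrix `C̃ = XXᵀ` and of the centered scatter matrix `C = X̄X̄ᵀ` are interlaced:
`λ_{j+1} ≤ λ̄_j ≤ λ_j` for every `j`. -/
theorem scatter_centered_eigenvalue_interlacing {d n : ℕ} (hn : 0 < n)
    (X : Matrix (Fin d) (Fin n) ℝ)
    (J : Matrix (Fin n) (Fin n) ℝ)
    (hJ : J = 1 - (n : ℝ)⁻¹ • Matrix.of (fun _ _ => (1 : ℝ)))
    (Xbar : Matrix (Fin d) (Fin n) ℝ) (hXbar : Xbar = X * J)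
    (hC : (X * Xᵀ).IsHermitian) (hCbar : (Xbar * Xbarᵀ).IsHermitian) (j : ℕ) :
    eigenvalueDesc hC (j + 1) ≤ eigenvalueDesc hCbar j ∧
      eigenvalueDesc hCbar j ≤ eigenvalueDesc hC j := by
  classical
  set a : ℝ := (n : ℝ)⁻¹ with ha
  have han : (n : ℝ) ≠ 0 := Nat.cast_ne_zero.2 hn.ne'
  have ha0 : 0 ≤ a := by positivity
  set E : Matrix (Fin n) (Fin n) ℝ := Matrix.of (fun _ _ => (1 : ℝ)) with hE
  set w : Fin d → ℝ := X *ᵥ (fun _ => 1) with hw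
  -- matrix algebra
  have hET : Eᵀ = E := by ext i k; simp [hE]
  have hJT : Jᵀ = J := by rw [hJ, transpose_sub, transpose_one, transpose_smul, hET]
  have hEE : E * E = (n : ℝ) • E := by
    ext i k
    simp [hE, mul_apply, Finset.sum_const]
  have hJJ : J * J = J := by
    have h1 : (a • E) * (a • E) = a • E := by
      rw [Matrix.smul_mul, Matrix.mul_smul, hEE, smul_smul, smul_smul]
      congr 1
      rw [ha]
      field_simp
    rw [hJ, sub_mul, one_mul, mul_sub, mul_one, h1]
    abel
  have hXEX : X * E * Xᵀ = vecMulVec w w := by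
    ext i k
    simp only [mul_apply, vecMulVec_apply, hE, of_apply, transpose_apply, hw, mulVec, dotProduct,
      mul_one]
    rw [← Finset.mul_sum]
  have hdecomp : X * Xᵀ = Xbar * Xbarᵀ + a • vecMulVec w w := by
    have hB : Xbar * Xbarᵀ = X * J * Xᵀ := by
      rw [hXbar, transpose_mul, hJT, ← Matrix.mul_assoc, Matrix.mul_assoc X J J, hJJ]
    rw [hB, hJ, Matrix.mul_sub, Matrix.mul_one, Matrix.mul_smul, Matrix.sub_mul,
      Matrix.smul_mul, hXEX]
    abel
  -- quadratic form identity
  have hquad : ∀ x : Fin d → ℝ,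
      x ⬝ᵥ ((X * Xᵀ) *ᵥ x) = x ⬝ᵥ ((Xbar * Xbarᵀ) *ᵥ x) + a * (w ⬝ᵥ x) ^ 2 := by
    intro x
    rw [hdecomp, add_mulVec, dotProduct_add, smul_mulVec, vecMulVec_mulVec',
      dotProduct_smul, dotProduct_smul, smul_eq_mul, smul_eq_mul, dotProduct_comm x w]
    ring
  -- positive semidefiniteness of the centered scatter matrix
  have hPSD : (Xbar * Xbarᵀ).PosSemidef := by
    have := Matrix.posSemidef_self_mul_conjTranspose Xbar
    simpa using this
  constructor
  · -- λ_{j+1}(A) ≤ λ̄_j(B)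
    by_cases h1d : j + 1 < d
    · have hjd : j < d := Nat.lt_of_succ_lt h1d
      -- linear functional x ↦ w ⬝ᵥ x
      set f : (Fin d → ℝ) →ₗ[ℝ] ℝ :=
        { toFun := fun x => w ⬝ᵥ x,
          map_add' := fun u v => dotProduct_add w u v,
          map_smul' := fun c u => by simp [dotProduct_smul] } with hf
      set S₀ := espan hC ((Finset.Ici (Fin.rev ⟨j + 1, h1d⟩)).image
        (Tuple.sort hC.eigenvalues)) with hS₀
      have hS₀rank : Module.finrank ℝ S₀ = j + 2 := by
        rw [hS₀, finrank_espan, card_hi hC h1d]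
      have hker : d - 1 ≤ Module.finrank ℝ (LinearMap.ker f) := by
        have h1 := LinearMap.finrank_range_add_finrank_ker f
        have h2 : Module.finrank ℝ (LinearMap.range f) ≤ 1 := by
          simpa [Module.finrank_self] using (LinearMap.range f).finrank_le
        rw [Module.finrank_fin_fun] at h1
        omega
      set S := S₀ ⊓ LinearMap.ker f with hS
      have hSrank : j + 1 ≤ Module.finrank ℝ S := by
        have hsum := Submodule.finrank_sup_add_finrank_inf_eq S₀ (LinearMap.ker f)
        have htop : Module.finrank ℝ (S₀ ⊔ LinearMap.ker f :
            Submodule ℝ (Fin d → ℝ)) ≤ d := by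
          simpa [Module.finrank_fin_fun] using (S₀ ⊔ LinearMap.ker f).finrank_le
        rw [hS]
        omega
      refine le_eigenvalueDesc hCbar hjd S hSrank ?_
      intro x hx
      have hx0 : x ∈ S₀ := hx.1
      have hxw : w ⬝ᵥ x = 0 := hx.2
      have h1 : eigenvalueDesc hC (j + 1) * (x ⬝ᵥ x) ≤ x ⬝ᵥ ((X * Xᵀ) *ᵥ x) :=
        quad_ge_of_mem_espan hC (fun i hi => desc_le_eig hC h1d hi) hx0
      have h2 := hquad x
      rw [hxw] at h2
      simp at h2
      linarith
    · have h0 : eigenvalueDesc hC (j + 1) = 0 := by rw [eigenvalueDesc, dif_neg h1d]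
      rw [h0]
      exact eigenvalueDesc_nonneg hCbar hPSD j
  · -- λ̄_j(B) ≤ λ_j(A)
    by_cases hjd : j < d
    · set S := espan hCbar ((Finset.Ici (Fin.rev ⟨j, hjd⟩)).image
        (Tuple.sort hCbar.eigenvalues)) with hS
      have hSrank : j + 1 ≤ Module.finrank ℝ S := by
        rw [hS, finrank_espan, card_hi hCbar hjd]
      refine le_eigenvalueDesc hC hjd S hSrank ?_
      intro x hx
      have h1 : eigenvalueDesc hCbar j * (x ⬝ᵥ x) ≤ x ⬝ᵥ ((Xbar * Xbarᵀ) *ᵥ x) :=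
        quad_ge_of_mem_espan hCbar (fun i hi => desc_le_eig hCbar hjd hi) hx
      have h2 := hquad x
      nlinarith [sq_nonneg (w ⬝ᵥ x), mul_nonneg ha0 (sq_nonneg (w ⬝ᵥ x))]
    · have h0 : eigenvalueDesc hCbar j = 0 := by rw [eigenvalueDesc, dif_neg hjd]
      have h0' : eigenvalueDesc hC j = 0 := by rw [eigenvalueDesc, dif_neg hjd]
      rw [h0, h0']

end thm
end

section
/- Let X be a real d-by-n matrix, and let X̄ = X·(I − (1/n)·11ᵀ) be the column-centered version of X. Then the determinant of the centered scatter matrix is bounded by that of the non-centered one: 0 ≤ det(X̄·X̄ᵀ) ≤ det(X·Xᵀ). -/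
/-!
The centering matrix `J` is a symmetric idempotent, so `X̄ X̄ᵀ = X J Xᵀ = X Xᵀ - n⁻¹ w wᵀ` with
`w = X 1`: the non-centered scatter matrix is the centered one plus a positive semidefinite rank-one term.
For positive semidefinite `A` and `c ≥ 0`, the matrix determinant lemma gives
`det (A + c v vᵀ) = det A * (1 + c vᵀ A⁻¹ v) ≥ det A` when `A` is invertible, and otherwise
`det A = 0 ≤ det (A + c v vᵀ)` since the latter matrix is positive semidefinite.
-/

open Matrix

namespace Matrix

section Determinant

variable {m : Type*} [Fintype m] [DecidableEq m]

theorem det_add_vecMulVec {R : Type*} [CommRing R] {A : Matrix m m R} (hA : IsUnit A.det)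
    (u v : m → R) : (A + vecMulVec u v).det = A.det * (1 + v ⬝ᵥ A⁻¹ *ᵥ u) := by
  rw [vecMulVec_eq Unit, det_add_replicateCol_mul_replicateRow hA, det_unique (1 + _),
    Matrix.mul_assoc, ← replicateCol_mulVec]
  rfl

theorem PosSemidef.det_le_det_add_smul_vecMulVec {A : Matrix m m ℝ} (hA : A.PosSemidef)
    {c : ℝ} (hc : 0 ≤ c) (v : m → ℝ) : A.det ≤ (A + c • vecMulVec v v).det := by
  by_cases h : IsUnit A.det
  · rw [← smul_vecMulVec, det_add_vecMulVec h, mulVec_smul, dotProduct_smul, smul_eq_mul]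
    have hquad : 0 ≤ v ⬝ᵥ A⁻¹ *ᵥ v := by simpa using hA.inv.dotProduct_mulVec_nonneg v
    nlinarith [hA.det_nonneg, mul_nonneg hc hquad]
  · rw [isUnit_iff_ne_zero, not_not] at h
    rw [h]
    refine (hA.add (PosSemidef.smul ?_ hc)).det_nonneg
    simpa using posSemidef_vecMulVec_self_star v

end Determinant

section Centering

variable (K ι : Type*) [Field K] [Fintype ι] [DecidableEq ι]

def centeringMatrix : Matrix ι ι K := 1 - (Fintype.card ι : K)⁻¹ • of fun _ _ => 1

variable {K ι}

theorem centeringMatrix_transpose : (centeringMatrix K ι)ᵀ = centeringMatrix K ι := by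
  ext i j
  simp [centeringMatrix, one_apply, eq_comm]

theorem centeringMatrix_mul_self :
    centeringMatrix K ι * centeringMatrix K ι = centeringMatrix K ι := by
  unfold centeringMatrix
  set a : K := (Fintype.card ι : K)
  have hE : (of fun _ _ => (1 : K) : Matrix ι ι K) * of (fun _ _ => 1) = a • of fun _ _ => 1 := by
    ext i j
    simp [a, mul_apply]
  have ha : a⁻¹ * a⁻¹ * a = a⁻¹ := by
    rw [mul_right_comm]
    simpa using mul_inv_mul_cancel a⁻¹
  simp only [sub_mul, mul_sub, Matrix.one_mul, Matrix.mul_one,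
    smul_mul_smul_comm, hE, smul_smul, ha]
  abel

theorem mul_centeringMatrix_mul_transpose {m : Type*} (X : Matrix m ι K) :
    X * centeringMatrix K ι * (X * centeringMatrix K ι)ᵀ
      = X * Xᵀ - (Fintype.card ι : K)⁻¹ • vecMulVec (X *ᵥ 1) (X *ᵥ 1) := by
  have hE : (of fun _ _ => (1 : K) : Matrix ι ι K) = vecMulVec 1 1 := by
    ext
    simp [vecMulVec_apply]
  rw [transpose_mul, centeringMatrix_transpose, Matrix.mul_assoc,
    ← Matrix.mul_assoc (centeringMatrix K ι), centeringMatrix_mul_self, centeringMatrix, hE,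
    Matrix.sub_mul, Matrix.mul_sub, Matrix.one_mul, Matrix.smul_mul, Matrix.mul_smul,
    vecMulVec_mul, mul_vecMulVec, vecMul_transpose]

end Centering

end Matrix

theorem det_centered_scatter_le_general {d n : ℕ}
    (X : Matrix (Fin d) (Fin n) ℝ)
    (Xbar : Matrix (Fin d) (Fin n) ℝ)
    (hXbar : Xbar = X * (1 - (n : ℝ)⁻¹ • Matrix.of (fun _ _ => (1 : ℝ)))) :
    0 ≤ (Xbar * Xbarᵀ).det ∧ (Xbar * Xbarᵀ).det ≤ (X * Xᵀ).det := by
  have hJ : 1 - (n : ℝ)⁻¹ • Matrix.of (fun _ _ => (1 : ℝ)) = centeringMatrix ℝ (Fin n) := by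
    simp [centeringMatrix]
  -- `hXbar` elaborates with the (defeq) `CStarMatrix` multiplication, which `Matrix` lemmas miss.
  have hXbar' : Xbar = X * centeringMatrix ℝ (Fin n) := hXbar.trans (congrArg (X * ·) hJ)
  have hpsd : (Xbar * Xbarᵀ).PosSemidef := by
    simpa using posSemidef_self_mul_conjTranspose Xbar
  refine ⟨hpsd.det_nonneg, ?_⟩
  have hdecomp : X * Xᵀ = Xbar * Xbarᵀ + (n : ℝ)⁻¹ • vecMulVec (X *ᵥ 1) (X *ᵥ 1) := by
    rw [hXbar', mul_centeringMatrix_mul_transpose, Fintype.card_fin, sub_add_cancel]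
  rw [hdecomp]
  exact hpsd.det_le_det_add_smul_vecMulVec (by positivity) _

/-- With `X̄ = X·(I - (1/n)·11ᵀ)` the column-centered version of `X`,
the determinant of the centered scatter matrix is bounded by that of the non-centered
one: `0 ≤ det(X̄·X̄ᵀ) ≤ det(X·Xᵀ)`. -/
theorem det_centered_scatter_le {d n : ℕ} (hn : 0 < n)
    (X : Matrix (Fin d) (Fin n) ℝ)
    (Xbar : Matrix (Fin d) (Fin n) ℝ)
    (hXbar : Xbar = X * (1 - (n : ℝ)⁻¹ • Matrix.of (fun _ _ => (1 : ℝ)))) :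
    0 ≤ (Xbar * Xbarᵀ).det ∧ (Xbar * Xbarᵀ).det ≤ (X * Xᵀ).det :=
  det_centered_scatter_le_general X Xbar hXbar
end
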